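/- In ℤ³ with basis e1, e2, e3 and form e_i²=0, e_i·e_j=2 (i≠j), if a class D satisfies D·e1 = D·e3 = 2 and D² = 0 and D ≠ e3 and D is in the lattice, and additionally D is fixed-determined by the constraints ι12*(e1)=e1, ι12*(e2)=e2, and ι12* preserves the intersection form, then ι12*(e3) = 2e1 + 2e2 − e3. -/

import Mathlib

/-! An isometry fixing e₁ and e₂ sends e₃ to a class `D` with `D·e₁ = D·e₂ = 2` and `D² = 0`.
The two linear conditions force `D = (1 - t, 1 - t, t)`, and then `D² = 4 (1 - t²)`, so `t = ±1`;
`t = 1` is `e₃` itself. -/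

/-- The intersection form on ℤ³ (basis e₁, e₂, e₃) with eᵢ² = 0 and eᵢ·eⱼ = 2 for i ≠ j. -/
def interForm (x y : Fin 3 → ℤ) : ℤ :=
  2 * (x 0 * y 1 + x 0 * y 2 + x 1 * y 0 + x 1 * y 2 + x 2 * y 0 + x 2 * y 1)

lemma interForm_e₁ (x : Fin 3 → ℤ) : interForm x ![1, 0, 0] = 2 * (x 1 + x 2) := by
  simp [interForm]

lemma interForm_e₂ (x : Fin 3 → ℤ) : interForm x ![0, 1, 0] = 2 * (x 0 + x 2) := by
  simp [interForm]

lemma eq_e₃_or_eq_of_interForm {D : Fin 3 → ℤ} (hD₁ : interForm D ![1, 0, 0] = 2)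
    (hD₂ : interForm D ![0, 1, 0] = 2) (hDD : interForm D D = 0) :
    D = ![0, 0, 1] ∨ D = ![2, 2, -1] := by
  rw [interForm_e₁] at hD₁
  rw [interForm_e₂] at hD₂
  have h₁ : D 1 = 1 - D 2 := by omega
  have h₀ : D 0 = 1 - D 2 := by omega
  have hsq : D 2 * D 2 = 1 := by
    simp only [interForm, h₀, h₁] at hDD
    linarith
  rcases mul_self_eq_one_iff.mp hsq with ht | ht
  · left
    ext i
    fin_cases i <;> simp [h₀, h₁, ht]
  · right
    ext i
    fin_cases i <;> simp [h₀, h₁, ht]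

theorem stmt_19_general (σ : (Fin 3 → ℤ) →ₗ[ℤ] (Fin 3 → ℤ))
    (hiso : ∀ x y : Fin 3 → ℤ, interForm (σ x) (σ y) = interForm x y)
    (h1 : σ ![1, 0, 0] = ![1, 0, 0])
    (h2 : σ ![0, 1, 0] = ![0, 1, 0])
    (h3 : σ ![0, 0, 1] ≠ ![0, 0, 1]) :
    σ ![0, 0, 1] = ![2, 2, -1] := by
  have hD₁ : interForm (σ ![0, 0, 1]) ![1, 0, 0] = 2 := by
    rw [← h1, hiso]; rfl
  have hD₂ : interForm (σ ![0, 0, 1]) ![0, 1, 0] = 2 := by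
    rw [← h2, hiso]; rfl
  have hDD : interForm (σ ![0, 0, 1]) (σ ![0, 0, 1]) = 0 := by
    rw [hiso]; rfl
  exact (eq_e₃_or_eq_of_interForm hD₁ hD₂ hDD).resolve_left h3

/-- An involutive isometry of the lattice (ℤ³, interForm) fixing e₁ and e₂ and not
fixing e₃ must send e₃ to 2e₁ + 2e₂ − e₃. -/
theorem stmt_19 (σ : (Fin 3 → ℤ) →ₗ[ℤ] (Fin 3 → ℤ))
    (hinv : σ ∘ₗ σ = LinearMap.id)
    (hiso : ∀ x y : Fin 3 → ℤ, interForm (σ x) (σ y) = interForm x y)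
    (h1 : σ ![1, 0, 0] = ![1, 0, 0])
    (h2 : σ ![0, 1, 0] = ![0, 1, 0])
    (h3 : σ ![0, 0, 1] ≠ ![0, 0, 1]) :
    σ ![0, 0, 1] = ![2, 2, -1] :=
  stmt_19_general σ hiso h1 h2 h3
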